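/- arXiv:1407.0154 — 2 statements merged into one kernel-verified Lean document; each statement's English description precedes it below -/
import Mathlib

section
/- Let E be an n×n integer matrix with det E ≠ 0. The map sending λ ∈ G_{f̃} to the character μ ↦ ⟨λ, μ⟩_E of G_f is a group isomorphism from G_{f̃} onto Hom(G_f, ℂ∖{0}). In particular the symmetry group of the Berglund–Hübsch transpose is canonically isomorphic to the character group of the symmetry group of f. -/
/-!
The map `m ↦ exp(2πi E⁻¹m)` is a surjection `ℤⁿ → G_f` (take logarithms coordinatewise) whose
kernel is `Eℤⁿ`. Characters of `G_f` are therefore the characters `m ↦ ∏ λᵢ ^ mᵢ` of `ℤⁿ` that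
vanish on `Eℤⁿ`, and since `∏ᵢ λᵢ ^ (Ek)ᵢ = ∏ⱼ (∏ᵢ λᵢ ^ Eᵢⱼ) ^ kⱼ` this happens exactly when
`λ ∈ G_{f̃}`. For `μ = exp(2πiβ)` the corresponding `m` is `Eβ`, and then
`∏ exp(2πiαᵢ) ^ mᵢ = exp(2πi αEβ)`.
-/

open Complex Matrix

/-- The group `G_f` of diagonal symmetries of the invertible polynomial with exponent
matrix `E`, as a subgroup of the torus `(ℂˣ)ⁿ`. (The symmetry group `G_{f̃}` of the
Berglund–Hübsch transpose is then `Gf Eᵀ`.) -/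
def Gf {n : ℕ} (E : Matrix (Fin n) (Fin n) ℤ) : Subgroup (Fin n → ℂˣ) where
  carrier := {μ | ∀ i, ∏ j, μ j ^ E i j = 1}
  one_mem' := by intro i; simp
  mul_mem' := by
    intro a b ha hb i
    simp only [Pi.mul_apply, mul_zpow, Finset.prod_mul_distrib, ha i, hb i, mul_one]
  inv_mem' := by
    intro a ha i
    simp only [Pi.inv_apply, _root_.inv_zpow, Finset.prod_inv_distrib, ha i, inv_one]

open scoped Real

noncomputable def expTwoPiI : AddChar ℂ ℂˣ where
  toFun z := Units.mk0 (exp (2 * π * I * z)) (exp_ne_zero _)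
  map_zero_eq_one' := by ext; simp
  map_add_eq_mul' a b := by ext; simp [mul_add, exp_add]

@[simp]
lemma coe_expTwoPiI (z : ℂ) : (expTwoPiI z : ℂ) = exp (2 * π * I * z) := rfl

lemma expTwoPiI_eq_one_iff {z : ℂ} : expTwoPiI z = 1 ↔ ∃ m : ℤ, z = m := by
  have h2πI : 2 * π * I ≠ 0 := by simp [Real.pi_ne_zero, I_ne_zero]
  rw [← Units.val_inj, coe_expTwoPiI, Units.val_one, exp_eq_one_iff]
  refine exists_congr fun m => ?_
  rw [mul_comm (m : ℂ), mul_right_inj' h2πI]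

lemma expTwoPiI_surjective : Function.Surjective expTwoPiI := by
  intro u
  refine ⟨log u / (2 * π * I), Units.ext ?_⟩
  have h2πI : 2 * π * I ≠ 0 := by simp [Real.pi_ne_zero, I_ne_zero]
  rw [coe_expTwoPiI, mul_div_cancel₀ _ h2πI, exp_log u.ne_zero]

lemma prod_expTwoPiI_zpow {ι : Type*} [Fintype ι] (z : ι → ℂ) (m : ι → ℤ) :
    ∏ i, expTwoPiI (z i) ^ m i = expTwoPiI (∑ i, m i * z i) := by
  simp_rw [← AddChar.map_zsmul_eq_zpow, zsmul_eq_mul]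
  exact (map_prod expTwoPiI.toMonoidHom (fun i => Multiplicative.ofAdd (m i * z i)) _).symm

lemma Finset.prod_zpow_eq_zpow_sum {ι G : Type*} [CommGroup G] (s : Finset ι)
    (f : ι → ℤ) (a : G) : ∏ i ∈ s, a ^ f i = a ^ ∑ i ∈ s, f i :=
  Finset.cons_induction (by simp)
    (fun _ _ _ h ↦ by rw [prod_cons, sum_cons, _root_.zpow_add, h]) s

section zpowChar

variable {ι G : Type*} [Fintype ι] [CommGroup G]

def zpowChar (lam : ι → G) : Multiplicative (ι → ℤ) →* G where
  toFun m := ∏ i, lam i ^ m.toAdd i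
  map_one' := by simp
  map_mul' m m' := by simp [_root_.zpow_add, Finset.prod_mul_distrib]

lemma zpowChar_apply (lam : ι → G) (m : ι → ℤ) :
    zpowChar lam (.ofAdd m) = ∏ i, lam i ^ m i := rfl

def zpowCharEquiv [DecidableEq ι] : (ι → G) ≃* (Multiplicative (ι → ℤ) →* G) where
  toFun := zpowChar
  invFun χ i := χ (.ofAdd (Pi.single i 1))
  left_inv lam := by
    ext i
    simp [zpowChar_apply, Pi.single_apply]
  right_inv χ := by
    refine MonoidHom.ext fun m => ?_
    obtain ⟨m, rfl⟩ := Multiplicative.ofAdd.surjective m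
    conv_rhs => rw [← Finset.univ_sum_single m]
    simp only [zpowChar_apply, ← map_zpow, ← ofAdd_zsmul, ofAdd_sum, map_prod]
    congr! with i
    rw [← Pi.single_smul, smul_eq_mul, mul_one]
  map_mul' lam lam' := by
    refine MonoidHom.ext fun m => ?_
    obtain ⟨m, rfl⟩ := Multiplicative.ofAdd.surjective m
    simp only [MonoidHom.mul_apply, zpowChar_apply, Pi.mul_apply, mul_zpow,
      Finset.prod_mul_distrib]

lemma zpowChar_mulVec (lam : ι → G) (M : Matrix ι ι ℤ) (k : ι → ℤ) :
    zpowChar lam (.ofAdd (M *ᵥ k)) = zpowChar (fun j => ∏ i, lam i ^ Mᵀ j i) (.ofAdd k) := by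
  simp_rw [zpowChar_apply, mulVec, dotProduct, ← Finset.prod_zpow_eq_zpow_sum, ← Finset.prod_zpow,
    ← _root_.zpow_mul, transpose_apply]
  exact Finset.prod_comm

end zpowChar

lemma Matrix.intCast_comp_mulVec {m n R : Type*} [Fintype n] [Ring R] (M : Matrix m n ℤ)
    (v : n → ℤ) : Int.cast ∘ (M *ᵥ v) = M.map (↑) *ᵥ (Int.cast ∘ v : n → R) :=
  funext (RingHom.map_mulVec (Int.castRingHom R) M v)

lemma Matrix.isUnit_det_map_intCast {ι K : Type*} [Fintype ι] [DecidableEq ι] [Field K]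
    [CharZero K] {E : Matrix ι ι ℤ} (hE : E.det ≠ 0) : IsUnit (E.map ((↑) : ℤ → K)).det := by
  rw [isUnit_iff_ne_zero, ← Int.cast_det]
  exact_mod_cast hE

namespace Gf

variable {n : ℕ} {E : Matrix (Fin n) (Fin n) ℤ}

lemma expTwoPiI_comp_mem_iff (z : Fin n → ℂ) :
    expTwoPiI ∘ z ∈ Gf E ↔ ∃ m : Fin n → ℤ, E.map (↑) *ᵥ z = Int.cast ∘ m := by
  change (∀ i, _) ↔ _
  simp only [Function.comp_apply, prod_expTwoPiI_zpow, expTwoPiI_eq_one_iff, funext_iff]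
  exact Classical.skolem

noncomputable def expInvMulVec (hE : E.det ≠ 0) : Multiplicative (Fin n → ℤ) →* Gf E where
  toFun m := ⟨expTwoPiI ∘ ((E.map (↑))⁻¹ *ᵥ (Int.cast ∘ m.toAdd)),
    (expTwoPiI_comp_mem_iff _).2 ⟨m.toAdd, by
      rw [mulVec_mulVec, mul_nonsing_inv _ (isUnit_det_map_intCast hE), one_mulVec]⟩⟩
  map_one' := by ext; simp
  map_mul' m m' := by
    have hcast : (Int.cast ∘ (m * m').toAdd : Fin n → ℂ) =
        Int.cast ∘ m.toAdd + Int.cast ∘ m'.toAdd :=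
      funext fun _ => Int.cast_add _ _
    refine Subtype.ext (funext fun j => ?_)
    simp only [hcast, mulVec_add, Subgroup.coe_mul, Pi.mul_apply, Function.comp_apply, Pi.add_apply,
      AddChar.map_add_eq_mul]

lemma coe_expInvMulVec_of_mulVec_eq (hE : E.det ≠ 0) {z : Fin n → ℂ} {m : Fin n → ℤ}
    (hz : E.map (↑) *ᵥ z = Int.cast ∘ m) :
    (expInvMulVec hE (.ofAdd m) : Fin n → ℂˣ) = expTwoPiI ∘ z := by
  change expTwoPiI ∘ _ = _
  rw [toAdd_ofAdd, ← hz, mulVec_mulVec, nonsing_inv_mul _ (isUnit_det_map_intCast hE),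
    one_mulVec]

lemma expInvMulVec_surjective (hE : E.det ≠ 0) : Function.Surjective (expInvMulVec hE) := by
  rintro ⟨μ, hμ⟩
  choose z hz using fun j => expTwoPiI_surjective (μ j)
  obtain rfl : expTwoPiI ∘ z = μ := funext hz
  obtain ⟨m, hm⟩ := (expTwoPiI_comp_mem_iff z).1 hμ
  exact ⟨.ofAdd m, Subtype.ext (coe_expInvMulVec_of_mulVec_eq hE hm)⟩

lemma expInvMulVec_ofAdd_eq_one_iff (hE : E.det ≠ 0) (m : Fin n → ℤ) :
    expInvMulVec hE (.ofAdd m) = 1 ↔ ∃ k, E *ᵥ k = m := by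
  constructor
  · intro h
    have h1 (j : Fin n) : expTwoPiI (((E.map (↑))⁻¹ *ᵥ (Int.cast ∘ m)) j) = 1 :=
      congrFun (congrArg Subtype.val h) j
    choose k hk using fun j => expTwoPiI_eq_one_iff.1 (h1 j)
    refine ⟨k, (Int.cast_injective (α := ℂ)).comp_left ?_⟩
    dsimp only
    rw [intCast_comp_mulVec, show Int.cast ∘ k = _ from (funext hk).symm, mulVec_mulVec,
      mul_nonsing_inv _ (isUnit_det_map_intCast hE), one_mulVec]
  · rintro ⟨k, rfl⟩
    apply Subtype.ext
    rw [coe_expInvMulVec_of_mulVec_eq hE (z := Int.cast ∘ k)]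
    · funext j
      exact expTwoPiI_eq_one_iff.2 ⟨k j, rfl⟩
    · exact (intCast_comp_mulVec E k).symm

lemma ker_expInvMulVec_le_ker_zpowChar_iff (hE : E.det ≠ 0) (lam : Fin n → ℂˣ) :
    (expInvMulVec hE).ker ≤ (zpowChar lam).ker ↔ lam ∈ Gf Eᵀ := by
  calc (expInvMulVec hE).ker ≤ (zpowChar lam).ker
      ↔ ∀ k, zpowChar lam (.ofAdd (E *ᵥ k)) = 1 := by
        refine ⟨fun h k => h ((expInvMulVec_ofAdd_eq_one_iff hE _).2 ⟨k, rfl⟩), fun h m hm => ?_⟩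
        obtain ⟨k, rfl⟩ := (expInvMulVec_ofAdd_eq_one_iff hE m.toAdd).1 hm
        exact h k
    _ ↔ zpowCharEquiv (fun j => ∏ i, lam i ^ Eᵀ j i) = 1 := by
        simp only [zpowChar_mulVec, MonoidHom.ext_iff, Multiplicative.forall]
        rfl
    _ ↔ lam ∈ Gf Eᵀ := by
        rw [MulEquiv.map_eq_one_iff, funext_iff]
        rfl

noncomputable def transposeMulEquivChar (hE : E.det ≠ 0) : Gf Eᵀ ≃* (Gf E →* ℂˣ) :=
  MulEquiv.mk'
    ((zpowCharEquiv.toEquiv.subtypeEquiv fun lam =>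
        (ker_expInvMulVec_le_ker_zpowChar_iff hE lam).symm).trans
      ((expInvMulVec hE).liftOfSurjective (expInvMulVec_surjective hE)))
    fun lam lam' => by
      refine MonoidHom.ext fun μ => ?_
      obtain ⟨m, rfl⟩ := expInvMulVec_surjective hE μ
      simp

lemma transposeMulEquivChar_apply_expInvMulVec (hE : E.det ≠ 0) (lam : Gf Eᵀ)
    (m : Multiplicative (Fin n → ℤ)) :
    transposeMulEquivChar hE lam (expInvMulVec hE m) = zpowChar lam m :=
  (expInvMulVec hE).liftOfRightInverse_comp_apply _ (Function.rightInverse_surjInv _) _ m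

end Gf

/-- The map sending `λ ∈ G_{f̃}` to the character `μ ↦ ⟨λ, μ⟩_E` of
`G_f` is a group isomorphism `G_{f̃} ≅ Hom(G_f, ℂ∖{0})`; here
`⟨λ, μ⟩_E = exp(2πi αEβᵀ)` for `λ = exp(2πiα)`, `μ = exp(2πiβ)`. -/
theorem stmt11 (n : ℕ) (E : Matrix (Fin n) (Fin n) ℤ) (hE : E.det ≠ 0) :
    ∃ Φ : Gf Eᵀ ≃* ((Gf E) →* ℂˣ),
      ∀ (lam : Gf Eᵀ) (mu : Gf E) (α β : Fin n → ℚ),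
        (∀ j, (((lam : Fin n → ℂˣ) j : ℂˣ) : ℂ)
            = Complex.exp (2 * (Real.pi : ℂ) * Complex.I * (α j : ℂ))) →
        (∀ j, (((mu : Fin n → ℂˣ) j : ℂˣ) : ℂ)
            = Complex.exp (2 * (Real.pi : ℂ) * Complex.I * (β j : ℂ))) →
        ((Φ lam mu : ℂˣ) : ℂ)
          = Complex.exp (2 * (Real.pi : ℂ) * Complex.I *
              ((∑ i, ∑ j, α i * (E i j : ℚ) * β j : ℚ) : ℂ)) := by
  refine ⟨Gf.transposeMulEquivChar hE, fun lam mu α β hα hβ => ?_⟩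
  have hlam : (lam : Fin n → ℂˣ) = expTwoPiI ∘ (fun i => (α i : ℂ)) :=
    funext fun i => Units.ext (hα i)
  have hmu : (mu : Fin n → ℂˣ) = expTwoPiI ∘ (fun j => (β j : ℂ)) :=
    funext fun j => Units.ext (hβ j)
  obtain ⟨m, hm⟩ := (Gf.expTwoPiI_comp_mem_iff _).1 (hmu ▸ mu.2)
  obtain rfl : Gf.expInvMulVec hE (.ofAdd m) = mu :=
    Subtype.ext ((Gf.coe_expInvMulVec_of_mulVec_eq hE hm).trans hmu.symm)
  rw [Gf.transposeMulEquivChar_apply_expInvMulVec, zpowChar_apply, hlam]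
  have hm' (i : Fin n) : (m i : ℂ) = ∑ j, (E i j : ℂ) * β j := (congrFun hm i).symm
  simp only [Function.comp_apply, prod_expTwoPiI_zpow, coe_expTwoPiI, hm', Finset.sum_mul]
  push_cast
  congr 2
  exact Finset.sum_congr rfl fun i _ => Finset.sum_congr rfl fun j _ => by ring
end

section
/- Let A be a finite commutative group, let ε: A → ℂ∖{0} be a group homomorphism whose image has cardinality k, and let m be a positive integer. Then in the polynomial ring ℂ[t], Π_{g ∈ A} (1 − ε(g)^m · t^m) = (1 − t^{lcm(m,k)})^{m·|A| / lcm(m,k)}. -/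
/-!
Since `ε(g)^m = φ(g)` for the homomorphism `φ = ε^m`, the product runs `|ker φ|` times over the
image of `φ`. That image is a finite subgroup of `ℂˣ`, hence the group of `d`-th roots of unity
with `d = k / gcd(k, m)`, and `∏_{ζ^d = 1} (1 - ζ Y) = 1 - Y^d`. With `Y = t^m` this gives
`1 - t^{md}`, where `md = lcm(m, k)` and `|A| = d · |ker φ|`.
-/

open Polynomial

lemma MonoidHom.prod_comp_eq_prod_range_pow {A G M : Type*} [CommGroup A] [Fintype A] [Group G]
    [CommMonoid M] (φ : A →* G) [Fintype φ.range] (f : G → M) :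
    ∏ a : A, f (φ a) = (∏ u : φ.range, f u) ^ Nat.card φ.ker := by
  classical
  let e : A ≃ φ.range × φ.ker :=
    Subgroup.groupEquivQuotientProdSubgroup.trans
      ((QuotientGroup.quotientKerEquivRange φ).toEquiv.prodCongr (Equiv.refl _))
  rw [Fintype.prod_equiv e (fun a => f (φ a)) (fun p => f p.1) fun _ => rfl,
    Fintype.prod_prod_type_right]
  simp only [Finset.prod_const, Finset.card_univ, Nat.card_eq_fintype_card]

lemma Subgroup.card_map_powMonoidHom {G : Type*} [CommGroup G] (H : Subgroup G) [IsCyclic H]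
    [Finite H] (n : ℕ) :
    Nat.card (H.map (powMonoidHom n)) = Nat.card H / (Nat.card H).gcd n := by
  have hle : H.map (powMonoidHom n) ≤ H := by
    rintro _ ⟨x, hx, rfl⟩
    exact pow_mem hx n
  rw [← IsCyclic.card_powMonoidHom_range, ← subgroupOf_map_powMonoidHom_eq_range]
  exact Nat.card_congr (subgroupOfEquivOfLe hle).toEquiv.symm

lemma Subgroup.prod_one_sub_C_mul {K : Type*} [CommRing K] [IsDomain K] (H : Subgroup Kˣ)
    [Fintype H] (p : K[X]) :
    ∏ u : H, (1 - C ((u : Kˣ) : K) * p) = 1 - p ^ Nat.card H := by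
  classical
  -- `H` is cyclic, and `C` maps it injectively onto the `|H|`-th roots of unity of `K[X]`.
  obtain ⟨g, hg⟩ := IsCyclic.exists_generator (α := H)
  have hord : orderOf (g : Kˣ) = Nat.card H := by
    rw [orderOf_submonoid, orderOf_eq_card_of_forall_mem_zpowers hg]
  have hprim : IsPrimitiveRoot (C ((g : Kˣ) : K)) (Nat.card H) :=
    ((IsPrimitiveRoot.coe_units_iff.mpr (hord ▸ IsPrimitiveRoot.orderOf _)).map_of_injective
      C_injective)
  have hinj : Function.Injective fun u : H => C ((u : Kˣ) : K) :=
    fun u v h => Subtype.ext (Units.ext (C_injective h))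
  have himage : Finset.univ.image (fun u : H => C ((u : Kˣ) : K)) =
      nthRootsFinset (Nat.card H) (1 : K[X]) := by
    refine Finset.eq_of_subset_of_card_le ?_ ?_
    · simp only [Finset.subset_iff, Finset.mem_image, Finset.mem_univ, true_and,
        forall_exists_index, forall_apply_eq_imp_iff]
      intro u
      rw [mem_nthRootsFinset Nat.card_pos, ← C_pow, ← Units.val_pow_eq_pow_val,
        ← Subgroup.coe_pow, pow_card_eq_one', Subgroup.coe_one, Units.val_one, C_1]
    · rw [hprim.card_nthRootsFinset, Finset.card_image_of_injective _ hinj, Finset.card_univ,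
        Nat.card_eq_fintype_card]
  rw [← one_pow (Nat.card H), hprim.pow_sub_pow_eq_prod_sub_mul _ _ Nat.card_pos, ← himage,
    Finset.prod_image fun u _ v _ h => hinj h, one_pow]

/-- Let `A` be a finite commutative group, `ε : A → ℂ∖{0}` a
homomorphism whose image has cardinality `k`, and `m` a positive integer. Then in `ℂ[t]`,
`∏_{g ∈ A} (1 − ε(g)^m t^m) = (1 − t^{lcm(m,k)})^{m|A|/lcm(m,k)}`. -/
theorem stmt16 {A : Type*} [CommGroup A] [Fintype A] (ε : A →* ℂˣ) (k m : ℕ)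
    (hk : Nat.card ε.range = k) (hm : 0 < m) :
    ∏ g : A, (1 - Polynomial.C ((ε g : ℂ) ^ m) * Polynomial.X ^ m)
      = (1 - Polynomial.X ^ Nat.lcm m k) ^ (m * Fintype.card A / Nat.lcm m k) := by
  set φ := (powMonoidHom m).comp ε
  have := Fintype.ofFinite φ.range
  have hφ : Nat.card φ.range = k / k.gcd m := by
    rw [MonoidHom.range_comp, ε.range.card_map_powMonoidHom, hk]
  have hlcm : m * Nat.card φ.range = m.lcm k := by
    rw [hφ, Nat.lcm, Nat.gcd_comm, Nat.mul_div_assoc _ (Nat.gcd_dvd_right m k)]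
  have hA : Fintype.card A = Nat.card φ.range * Nat.card φ.ker := by
    rw [← Subgroup.index_ker, mul_comm, Subgroup.card_mul_index, Nat.card_eq_fintype_card]
  calc ∏ g : A, (1 - C ((ε g : ℂ) ^ m) * X ^ m)
      = ∏ g : A, (1 - C ((φ g : ℂˣ) : ℂ) * X ^ m) := by
        simp only [φ, MonoidHom.comp_apply, powMonoidHom_apply, Units.val_pow_eq_pow_val]
    _ = (∏ u : φ.range, (1 - C ((u : ℂˣ) : ℂ) * X ^ m)) ^ Nat.card φ.ker :=
        φ.prod_comp_eq_prod_range_pow fun u => 1 - C (u : ℂ) * X ^ m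
    _ = (1 - X ^ m.lcm k) ^ (m * Fintype.card A / m.lcm k) := by
        have hpos : 0 < m.lcm k := Nat.lcm_pos hm (hk ▸ Nat.card_pos)
        rw [φ.range.prod_one_sub_C_mul, ← pow_mul, hlcm, hA, ← mul_assoc, hlcm,
          Nat.mul_div_cancel_left _ hpos]
end
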